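/- arXiv:1307.7253 — 4 statements merged into one kernel-verified Lean document; each statement's English description precedes it below -/
import Mathlib

section
/- For every integer m ≥ 1 and every Borel set A ⊆ E ∖ {0}, M^{<m>}(A) = (1/(m−1)!) ∫_0^1 M(t^{−1}A) (−ln t)^{m−1} dt, the equality holding in [0,∞]. -/
/-!
Write `f u = M (u⁻¹ A)`. Since `s⁻¹ (t⁻¹ A) = (t s)⁻¹ A`, the induction step is the identity
`∫₀¹ ∫₀¹ f (t s) (-log s)^k ds dt = (k+1)⁻¹ ∫₀¹ f u (-log u)^(k+1) du`,
obtained by substituting `u = t s` in the `t`-integral, exchanging the order of integration over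
the triangle `0 < u < s < 1`, and using `∫ᵤ¹ (-log s)^k ds / s = (-log u)^(k+1) / (k+1)`.

As `M` is an arbitrary measure, `f` need not be measurable. The identity is proved for measurable
functions and transferred to `f` through a measurable lower envelope `g ≤ f` which dominates a.e.
every measurable minorant of `f`: then `∫⁻ f ∂ν = ∫⁻ g ∂ν` for every `ν ≪ volume`, and this class of
measures is stable under the substitutions used.
-/

open MeasureTheory Set
open scoped ENNReal

section LowerEnvelope

variable {α β : Type*} [MeasurableSpace α] [MeasurableSpace β] {μ ν : Measure α}
  {f g : α → ℝ≥0∞}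

structure IsLowerEnvelope (μ : Measure α) (f g : α → ℝ≥0∞) : Prop where
  measurable : Measurable g
  le : g ≤ f
  ae_le : ∀ h : α → ℝ≥0∞, Measurable h → h ≤ f → h ≤ᵐ[μ] g

theorem exists_isLowerEnvelope [SigmaFinite μ] (f : α → ℝ≥0∞) :
    ∃ g, IsLowerEnvelope μ f g := by
  obtain ⟨g, hgm, hgf, hfg⟩ := exists_measurable_le_forall_setLIntegral_eq μ f
  refine ⟨g, hgm, hgf, fun h hm hhf =>
    ae_le_of_forall_setLIntegral_le_of_sigmaFinite hm fun s _ _ => ?_⟩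
  exact (hfg s).symm ▸ lintegral_mono hhf

namespace IsLowerEnvelope

theorem mono_ac (hg : IsLowerEnvelope μ f g) (hν : ν ≪ μ) : IsLowerEnvelope ν f g :=
  ⟨hg.measurable, hg.le, fun h hm hhf => hν.ae_le (hg.ae_le h hm hhf)⟩

theorem comp_measurableEquiv (hg : IsLowerEnvelope μ f g) (e : β ≃ᵐ α) {μ' : Measure β}
    (he : Measure.QuasiMeasurePreserving e μ' μ) : IsLowerEnvelope μ' (f ∘ e) (g ∘ e) := by
  refine ⟨hg.measurable.comp e.measurable, fun b => hg.le (e b), fun h hm hhf => ?_⟩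
  have hle : h ∘ e.symm ≤ f := fun a => by simpa using hhf (e.symm a)
  filter_upwards [he.ae (hg.ae_le _ (hm.comp e.symm.measurable) hle)] with b hb
  simpa using hb

theorem lintegral_eq (hg : IsLowerEnvelope μ f g) : ∫⁻ a, f a ∂μ = ∫⁻ a, g a ∂μ := by
  obtain ⟨h, hm, hhf, hfh⟩ := exists_measurable_le_lintegral_eq μ f
  refine le_antisymm ?_ (lintegral_mono hg.le)
  exact hfh ▸ lintegral_mono_ae (hg.ae_le h hm hhf)

theorem lintegral_mul_eq (hg : IsLowerEnvelope μ f g) {w : α → ℝ≥0∞} (hw : Measurable w)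
    (hw_top : ∀ᵐ a ∂μ, w a < ∞) : ∫⁻ a, f a * w a ∂μ = ∫⁻ a, g a * w a ∂μ := by
  have := (hg.mono_ac (withDensity_absolutelyContinuous μ w)).lintegral_eq
  simp only [lintegral_withDensity_eq_lintegral_mul_non_measurable μ hw hw_top,
    Pi.mul_apply] at this
  simpa only [mul_comm (w _)] using this

end IsLowerEnvelope

end LowerEnvelope

theorem Real.quasiMeasurePreserving_const_mul {t : ℝ} (ht : t ≠ 0) :
    Measure.QuasiMeasurePreserving (t * ·) volume volume :=
  ⟨measurable_const_mul t, by
    rw [Real.map_volume_mul_left ht]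
    exact Measure.smul_absolutelyContinuous⟩

theorem setLIntegral_Ioo_zero_one_comp_mul_right {G : ℝ → ℝ≥0∞} (hG : Measurable G) {s : ℝ}
    (hs : 0 < s) :
    ∫⁻ t in Ioo 0 1, G (t * s) = ENNReal.ofReal s⁻¹ * ∫⁻ u in Ioo 0 s, G u := by
  have hpre : (· * s) ⁻¹' Ioo 0 s = Ioo 0 1 := by
    rw [preimage_mul_const_Ioo₀ _ _ hs, zero_div, div_self hs.ne']
  rw [← hpre, ← setLIntegral_map measurableSet_Ioo hG (measurable_mul_const s),
    Real.map_volume_mul_right hs.ne', Measure.restrict_smul, lintegral_smul_measure,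
    abs_of_pos (inv_pos.mpr hs), smul_eq_mul]

theorem lintegral_Ioo_lintegral_Ioo_swap {F : ℝ → ℝ → ℝ≥0∞}
    (hF : Measurable (Function.uncurry F)) (a b : ℝ) :
    ∫⁻ s in Ioo a b, ∫⁻ u in Ioo a s, F s u = ∫⁻ u in Ioo a b, ∫⁻ s in Ioo u b, F s u := by
  have hmeas : Measurable (Function.uncurry fun s u => (Iio s).indicator (F s) u) := by
    have : (Function.uncurry fun s u => (Iio s).indicator (F s) u) =
        {p : ℝ × ℝ | p.2 < p.1}.indicator (Function.uncurry F) := by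
      ext ⟨s, u⟩; rfl
    exact this ▸ hF.indicator (measurableSet_lt measurable_snd measurable_fst)
  calc ∫⁻ s in Ioo a b, ∫⁻ u in Ioo a s, F s u
      = ∫⁻ s in Ioo a b, ∫⁻ u in Ioo a b, (Iio s).indicator (F s) u := by
        refine setLIntegral_congr_fun measurableSet_Ioo fun s hs => ?_
        rw [lintegral_indicator measurableSet_Iio, Measure.restrict_restrict measurableSet_Iio,
          inter_comm, Ioo_inter_Iio, min_eq_right hs.2.le]
    _ = ∫⁻ u in Ioo a b, ∫⁻ s in Ioo a b, (Ioi u).indicator (fun s => F s u) s := by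
        rw [lintegral_lintegral_swap hmeas.aemeasurable]
        rfl
    _ = ∫⁻ u in Ioo a b, ∫⁻ s in Ioo u b, F s u := by
        refine setLIntegral_congr_fun measurableSet_Ioo fun u hu => ?_
        rw [lintegral_indicator measurableSet_Ioi, Measure.restrict_restrict measurableSet_Ioi,
          inter_comm, Ioo_inter_Ioi, max_eq_right hu.1.le]

theorem lintegral_Ioo_neg_log_pow_div (k : ℕ) {u : ℝ} (hu0 : 0 < u) (hu1 : u ≤ 1) :
    ∫⁻ s in Ioo u 1, ENNReal.ofReal ((-Real.log s) ^ k / s) =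
      ENNReal.ofReal ((-Real.log u) ^ (k + 1) / (k + 1)) := by
  have hpos : ∀ s ∈ Icc u 1, s ≠ 0 := fun s hs => (hu0.trans_le hs.1).ne'
  have hint : IntegrableOn (fun s => (-Real.log s) ^ k / s) (Icc u 1) :=
    (((Real.continuousOn_log.mono hpos).neg.pow k).div continuousOn_id hpos).integrableOn_Icc
  have hderiv : ∀ s ∈ Ioo u 1,
      HasDerivAt (fun s => -(-Real.log s) ^ (k + 1) / (k + 1)) ((-Real.log s) ^ k / s) s := by
    intro s hs
    have hs0 : s ≠ 0 := hpos s (Ioo_subset_Icc_self hs)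
    refine (((Real.hasDerivAt_log hs0).fun_neg.fun_pow (k + 1)).fun_neg.div_const
      (k + 1 : ℝ)).congr_deriv ?_
    rw [Nat.add_sub_cancel]
    push_cast
    field_simp
  have hnonneg : ∀ s ∈ Ioo u 1, 0 ≤ (-Real.log s) ^ k / s := fun s hs =>
    div_nonneg (pow_nonneg (neg_nonneg.mpr (Real.log_nonpos (hu0.trans hs.1).le hs.2.le)) k)
      (hu0.trans hs.1).le
  rw [← ofReal_integral_eq_lintegral_ofReal (hint.mono_set Ioo_subset_Icc_self)
    ((ae_restrict_iff' measurableSet_Ioo).mpr (ae_of_all _ hnonneg)),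
    ← integral_Ioc_eq_integral_Ioo, ← intervalIntegral.integral_of_le hu1,
    intervalIntegral.integral_eq_sub_of_hasDerivAt_of_le hu1 ?_ hderiv
      ((intervalIntegrable_iff_integrableOn_Icc_of_le hu1).mpr hint)]
  · simp [neg_div]
  · exact (((Real.continuousOn_log.mono hpos).neg.pow (k + 1)).neg.div_const _)

theorem lintegral_Ioo_lintegral_Ioo_comp_mul_mul_neg_log_pow_of_measurable {g : ℝ → ℝ≥0∞}
    (hg : Measurable g) (k : ℕ) :
    ∫⁻ t in Ioo 0 1, ∫⁻ s in Ioo 0 1, g (t * s) * ENNReal.ofReal ((-Real.log s) ^ k) =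
      (k + 1 : ℝ≥0∞)⁻¹ * ∫⁻ u in Ioo 0 1, g u * ENNReal.ofReal ((-Real.log u) ^ (k + 1)) := by
  calc ∫⁻ t in Ioo 0 1, ∫⁻ s in Ioo 0 1, g (t * s) * ENNReal.ofReal ((-Real.log s) ^ k)
      = ∫⁻ s in Ioo 0 1, (∫⁻ t in Ioo 0 1, g (t * s)) * ENNReal.ofReal ((-Real.log s) ^ k) := by
        rw [lintegral_lintegral_swap (by fun_prop)]
        exact lintegral_congr fun s => lintegral_mul_const _ (by fun_prop)
    _ = ∫⁻ s in Ioo 0 1, ∫⁻ u in Ioo 0 s, g u * ENNReal.ofReal ((-Real.log s) ^ k / s) := by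
        refine setLIntegral_congr_fun measurableSet_Ioo fun s hs => ?_
        rw [setLIntegral_Ioo_zero_one_comp_mul_right hg hs.1, lintegral_mul_const _ hg,
          div_eq_mul_inv, ENNReal.ofReal_mul (pow_nonneg (neg_nonneg.mpr
            (Real.log_nonpos hs.1.le hs.2.le)) k)]
        ring
    _ = ∫⁻ u in Ioo 0 1, ∫⁻ s in Ioo u 1, g u * ENNReal.ofReal ((-Real.log s) ^ k / s) :=
        lintegral_Ioo_lintegral_Ioo_swap (by fun_prop) 0 1
    _ = ∫⁻ u in Ioo 0 1, g u * ENNReal.ofReal ((-Real.log u) ^ (k + 1)) * (k + 1 : ℝ≥0∞)⁻¹ := by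
        refine setLIntegral_congr_fun measurableSet_Ioo fun u hu => ?_
        rw [lintegral_const_mul _ (by fun_prop), lintegral_Ioo_neg_log_pow_div k hu.1 hu.2.le,
          ENNReal.ofReal_div_of_pos (by positivity), div_eq_mul_inv, mul_assoc]
        norm_cast
    _ = (k + 1 : ℝ≥0∞)⁻¹ * ∫⁻ u in Ioo 0 1, g u * ENNReal.ofReal ((-Real.log u) ^ (k + 1)) := by
        rw [lintegral_mul_const _ (by fun_prop), mul_comm]

theorem lintegral_Ioo_lintegral_Ioo_comp_mul_mul_neg_log_pow (f : ℝ → ℝ≥0∞) (k : ℕ) :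
    ∫⁻ t in Ioo 0 1, ∫⁻ s in Ioo 0 1, f (t * s) * ENNReal.ofReal ((-Real.log s) ^ k) =
      (k + 1 : ℝ≥0∞)⁻¹ * ∫⁻ u in Ioo 0 1, f u * ENNReal.ofReal ((-Real.log u) ^ (k + 1)) := by
  obtain ⟨g, hg⟩ := exists_isLowerEnvelope (μ := volume) f
  have hfin : ∀ j : ℕ, ∀ᵐ s ∂volume.restrict (Ioo (0 : ℝ) 1),
      ENNReal.ofReal ((-Real.log s) ^ j) < ∞ :=
    fun _ => ae_of_all _ fun _ => ENNReal.ofReal_lt_top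
  have hinner : ∀ t ∈ Ioo (0 : ℝ) 1,
      ∫⁻ s in Ioo 0 1, f (t * s) * ENNReal.ofReal ((-Real.log s) ^ k) =
        ∫⁻ s in Ioo 0 1, g (t * s) * ENNReal.ofReal ((-Real.log s) ^ k) := fun t ht =>
    ((hg.comp_measurableEquiv (Homeomorph.mulLeft₀ t ht.1.ne').toMeasurableEquiv
      (Real.quasiMeasurePreserving_const_mul ht.1.ne')).mono_ac
      Measure.absolutelyContinuous_restrict).lintegral_mul_eq (by fun_prop) (hfin k)
  rw [setLIntegral_congr_fun measurableSet_Ioo hinner,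
    lintegral_Ioo_lintegral_Ioo_comp_mul_mul_neg_log_pow_of_measurable hg.measurable,
    (hg.mono_ac Measure.absolutelyContinuous_restrict).lintegral_mul_eq (by fun_prop) (hfin _)]

theorem iterated_sSelfdec_levyMeasure_general
    {E : Type*} [NormedAddCommGroup E] [NormedSpace ℝ E]
    [MeasurableSpace E] [BorelSpace E]
    (M : Measure E) (Mit : ℕ → Measure E)
    (h1 : ∀ A : Set E, MeasurableSet A → A ⊆ {(0:E)}ᶜ →
        Mit 1 A = ∫⁻ t in Set.Ioo (0:ℝ) 1, M ((fun x => t • x) ⁻¹' A))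
    (hstep : ∀ m : ℕ, 1 ≤ m → ∀ A : Set E, MeasurableSet A → A ⊆ {(0:E)}ᶜ →
        Mit (m + 1) A = ∫⁻ t in Set.Ioo (0:ℝ) 1, Mit m ((fun x => t • x) ⁻¹' A))
    (m : ℕ) (hm : 1 ≤ m) (A : Set E) (hA : MeasurableSet A) (hA0 : A ⊆ {(0:E)}ᶜ) :
    Mit m A = (((m - 1).factorial : ℝ≥0∞))⁻¹ *
      ∫⁻ t in Set.Ioo (0:ℝ) 1,
        M ((fun x => t • x) ⁻¹' A) * ENNReal.ofReal ((-Real.log t) ^ (m - 1)) := by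
  obtain ⟨k, rfl⟩ := Nat.exists_eq_add_of_le' hm
  clear hm
  rw [Nat.add_sub_cancel]
  induction k generalizing A with
  | zero => simpa using h1 A hA hA0
  | succ k ih =>
    have hA0_preimage : ∀ t : ℝ, (fun x : E => t • x) ⁻¹' A ⊆ {0}ᶜ := fun t x hx hx0 =>
      hA0 hx (by simp [show x = 0 from hx0])
    calc Mit (k + 1 + 1) A
        = ∫⁻ t in Ioo 0 1, (k.factorial : ℝ≥0∞)⁻¹ * ∫⁻ s in Ioo 0 1,
            M ((fun x => (t * s) • x) ⁻¹' A) * ENNReal.ofReal ((-Real.log s) ^ k) := by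
          rw [hstep _ (by omega) A hA hA0]
          refine lintegral_congr fun t => ?_
          simp only [ih _ (hA.preimage (measurable_const_smul t)) (hA0_preimage t),
            preimage_preimage, smul_smul]
      _ = ((k + 1).factorial : ℝ≥0∞)⁻¹ * ∫⁻ u in Ioo 0 1,
            M ((fun x => u • x) ⁻¹' A) * ENNReal.ofReal ((-Real.log u) ^ (k + 1)) := by
          rw [lintegral_const_mul' _ _ (by simp [Nat.factorial_ne_zero]),
            lintegral_Ioo_lintegral_Ioo_comp_mul_mul_neg_log_pow (fun u => M ((u • ·) ⁻¹' A)),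
            ← mul_assoc, Nat.factorial_succ, Nat.cast_mul, ENNReal.mul_inv (by simp) (by simp),
            mul_comm ((k.factorial : ℝ≥0∞)⁻¹)]
          push_cast
          rfl

/-- Let `E` be a real separable Banach space and `M` a Borel measure on
`E ∖ {0}`. With `M^{<1>}(A) := ∫_0^1 M(t⁻¹A) dt` (where `t⁻¹A = (fun x => t • x) ⁻¹' A`)
and `M^{<m+1>} := (M^{<m>})^{<1>}`, for every integer `m ≥ 1` and every Borel set
`A ⊆ E ∖ {0}` one has
`M^{<m>}(A) = (1/(m-1)!) ∫_0^1 M(t⁻¹A) (-ln t)^(m-1) dt`, the equality holding in `[0,∞]`. -/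
theorem iterated_sSelfdec_levyMeasure
    {E : Type*} [NormedAddCommGroup E] [NormedSpace ℝ E] [CompleteSpace E]
    [MeasurableSpace E] [BorelSpace E] [SecondCountableTopology E]
    (M : Measure E) (Mit : ℕ → Measure E)
    (h1 : ∀ A : Set E, MeasurableSet A → A ⊆ {(0:E)}ᶜ →
        Mit 1 A = ∫⁻ t in Set.Ioo (0:ℝ) 1, M ((fun x => t • x) ⁻¹' A))
    (hstep : ∀ m : ℕ, 1 ≤ m → ∀ A : Set E, MeasurableSet A → A ⊆ {(0:E)}ᶜ →
        Mit (m + 1) A = ∫⁻ t in Set.Ioo (0:ℝ) 1, Mit m ((fun x => t • x) ⁻¹' A))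
    (m : ℕ) (hm : 1 ≤ m) (A : Set E) (hA : MeasurableSet A) (hA0 : A ⊆ {(0:E)}ᶜ) :
    Mit m A = (((m - 1).factorial : ℝ≥0∞))⁻¹ *
      ∫⁻ t in Set.Ioo (0:ℝ) 1,
        M ((fun x => t • x) ⁻¹' A) * ENNReal.ofReal ((-Real.log t) ^ (m - 1)) :=
  iterated_sSelfdec_levyMeasure_general M Mit h1 hstep m hm A hA hA0
end

section
/- Suppose M({x : ‖x‖ > 1}) < ∞. Then for every integer m ≥ 1 the E-valued Bochner integrals below are well defined and ∫_{{x : ‖x‖ > 1}} x ‖x‖^{−2} M^{<m>}(dx) = (1/m!) ∫_{{z : ‖z‖ > 1}} z ‖z‖^{−2} (ln ‖z‖)^m M(dz). -/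
/-!
Push `M ⊗ Leb|(0,1)` forward along `(x, t) ↦ t • x`: on `{‖x‖ > 1}` this is `M^{<1>}`, and Fubini
turns an integral of `f` against `M^{<1>}` into the integral against `M` of
`x ↦ ∫_{‖x‖⁻¹}^1 f (t • x) dt`. For the kernels `f_n z = (log ‖z‖)^n / n! • z / ‖z‖²` this average
is `f_{n+1} x`, since `(log t + log ‖x‖)^{n+1} / (n+1)!` is a primitive of
`(log t + log ‖x‖)^n / (n! t)` vanishing at `t = ‖x‖⁻¹`. Hence `m` steps turn `f_0` into `f_m`.
Everything is finite: `(log u)^n / n! ≤ u` bounds each kernel by `1` on `{‖z‖ > 1}`, and dilation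
averaging does not increase the mass of that set.
-/

open MeasureTheory Real Set

theorem integral_Ioo_log_add_log_pow_div {r : ℝ} (hr : 1 ≤ r) (n : ℕ) :
    ∫ t in Ioo r⁻¹ 1, (log t + log r) ^ n / n.factorial / t
      = (log r) ^ (n + 1) / (n + 1).factorial := by
  have hr₀ : 0 < r := one_pos.trans_le hr
  have hle : r⁻¹ ≤ 1 := inv_le_one_of_one_le₀ hr
  have hpos : ∀ t ∈ uIcc r⁻¹ 1, 0 < t := fun t ht =>
    (inv_pos.2 hr₀).trans_le (uIcc_of_le hle ▸ ht).1
  have hderiv : ∀ t ∈ uIcc r⁻¹ 1, HasDerivAt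
      (fun t => (log t + log r) ^ (n + 1) / (n + 1).factorial)
      ((log t + log r) ^ n / n.factorial / t) t := by
    intro t ht
    refine ((((hasDerivAt_log (hpos t ht).ne').add_const (log r)).pow (n + 1)).div_const
      ((n + 1).factorial : ℝ)).congr_deriv ?_
    rw [Nat.factorial_succ, Nat.add_sub_cancel]
    push_cast
    field_simp
  have hcont : IntervalIntegrable (fun t => (log t + log r) ^ n / n.factorial / t) volume r⁻¹ 1 :=
    (((continuousOn_log.mono fun t ht => (hpos t ht).ne').add continuousOn_const).pow n
      |>.div_const _ |>.div continuousOn_id fun t ht => (hpos t ht).ne').intervalIntegrable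
  rw [← integral_Ioc_eq_integral_Ioo, ← intervalIntegral.integral_of_le hle,
    intervalIntegral.integral_eq_sub_of_hasDerivAt hderiv hcont, log_one, log_inv]
  simp

theorem measurableSet_one_lt_norm {E : Type*} [NormedAddCommGroup E] [MeasurableSpace E]
    [OpensMeasurableSpace E] : MeasurableSet {z : E | 1 < ‖z‖} :=
  measurableSet_lt measurable_const measurable_norm

theorem one_lt_norm_subset_compl_zero {E : Type*} [NormedAddCommGroup E] :
    {z : E | 1 < ‖z‖} ⊆ {0}ᶜ := by
  rintro z hz rfl
  norm_num at hz

section Kernel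

variable {E : Type*} [NormedAddCommGroup E] [NormedSpace ℝ E]

noncomputable def logKernel (n : ℕ) (z : E) : E :=
  ((log ‖z‖) ^ n / n.factorial / ‖z‖ ^ 2) • z

theorem logKernel_zero (z : E) : logKernel 0 z = (‖z‖ ^ 2)⁻¹ • z := by
  simp [logKernel]

theorem logKernel_eq_inv_factorial_smul (n : ℕ) (z : E) :
    logKernel n z = (n.factorial : ℝ)⁻¹ • ((log ‖z‖) ^ n / ‖z‖ ^ 2) • z := by
  rw [logKernel, smul_smul]
  ring_nf

theorem norm_logKernel_le_one (n : ℕ) {z : E} (hz : 1 ≤ ‖z‖) : ‖logKernel n z‖ ≤ 1 := by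
  have hz₀ : 0 < ‖z‖ := one_pos.trans_le hz
  have hlog : 0 ≤ log ‖z‖ := log_nonneg hz
  -- one term of the exponential series: `(log ‖z‖) ^ n / n! ≤ ‖z‖`
  have hexp := pow_div_factorial_le_exp (log ‖z‖) hlog n
  rw [exp_log hz₀] at hexp
  rw [logKernel, norm_smul, norm_of_nonneg (by positivity), div_mul_eq_mul_div,
    div_le_one (by positivity)]
  nlinarith

theorem logKernel_smul {n : ℕ} {t : ℝ} (ht : 0 < t) {x : E} (hx : x ≠ 0) :
    logKernel n (t • x) = ((log t + log ‖x‖) ^ n / n.factorial / t) • (‖x‖ ^ 2)⁻¹ • x := by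
  have hx₀ : 0 < ‖x‖ := norm_pos_iff.2 hx
  rw [logKernel, norm_smul, norm_of_nonneg ht.le, log_mul ht.ne' hx₀.ne', smul_smul, smul_smul]
  congr 1
  field_simp

theorem preimage_smul_one_lt_norm_inter_Ioo {x : E} (hx : x ≠ 0) :
    (fun t : ℝ => t • x) ⁻¹' {z | 1 < ‖z‖} ∩ Ioo 0 1 = Ioo ‖x‖⁻¹ 1 := by
  have hx₀ : 0 < ‖x‖ := norm_pos_iff.2 hx
  ext t
  simp only [mem_inter_iff, mem_preimage, mem_ofPred_eq, mem_Ioo, norm_smul, Real.norm_eq_abs,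
    inv_lt_iff_one_lt_mul₀ hx₀]
  constructor
  · rintro ⟨h, ht₀, ht₁⟩
    rw [abs_of_pos ht₀] at h
    exact ⟨by linarith, ht₁⟩
  · rintro ⟨h, ht₁⟩
    have ht₀ : 0 < t := pos_of_mul_pos_left (one_pos.trans h) hx₀.le
    rw [abs_of_pos ht₀]
    exact ⟨by linarith, ht₀, ht₁⟩

theorem one_lt_norm_of_one_lt_norm_smul {t : ℝ} (ht : t ∈ Ioo (0:ℝ) 1) {x : E}
    (h : 1 < ‖t • x‖) : 1 < ‖x‖ := by
  rw [norm_smul, Real.norm_eq_abs, abs_of_pos ht.1] at h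
  nlinarith [norm_nonneg x, ht.2]

theorem integral_Ioo_indicator_logKernel_smul [CompleteSpace E] (n : ℕ) {x : E}
    (hx : 1 < ‖x‖) :
    ∫ t in Ioo (0:ℝ) 1, {z : E | 1 < ‖z‖}.indicator (logKernel n) (t • x)
      = logKernel (n + 1) x := by
  have hx₀ : x ≠ 0 := norm_pos_iff.1 (one_pos.trans hx)
  have hT : MeasurableSet ((fun t : ℝ => t • x) ⁻¹' {z | 1 < ‖z‖}) :=
    (isOpen_lt continuous_const (continuous_id.smul continuous_const).norm).measurableSet
  calc ∫ t in Ioo (0:ℝ) 1, {z : E | 1 < ‖z‖}.indicator (logKernel n) (t • x)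
      = ∫ t in Ioo (0:ℝ) 1, ((fun t : ℝ => t • x) ⁻¹' {z | 1 < ‖z‖}).indicator
          (fun t => logKernel n (t • x)) t := by
        simp only [← indicator_comp_right (fun t : ℝ => t • x)]
        rfl
    _ = ∫ t in Ioo ‖x‖⁻¹ 1, logKernel n (t • x) := by
        rw [integral_indicator hT, Measure.restrict_restrict hT,
          preimage_smul_one_lt_norm_inter_Ioo hx₀]
    _ = ∫ t in Ioo ‖x‖⁻¹ 1, ((log t + log ‖x‖) ^ n / n.factorial / t) • (‖x‖ ^ 2)⁻¹ • x :=
        setIntegral_congr_fun measurableSet_Ioo fun t ht =>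
          logKernel_smul ((inv_pos.2 (one_pos.trans hx)).trans ht.1) hx₀
    _ = logKernel (n + 1) x := by
        rw [integral_smul_const, integral_Ioo_log_add_log_pow_div hx.le, logKernel, smul_smul]
        ring_nf

variable [MeasurableSpace E]

/-- `μ` agrees with `ν^{<1>}` on `E ∖ {0}`. -/
def IsDilationAverage (ν μ : Measure E) : Prop :=
  ∀ A : Set E, MeasurableSet A → A ⊆ {(0:E)}ᶜ →
    μ A = ∫⁻ t in Ioo (0:ℝ) 1, ν ((fun x => t • x) ⁻¹' A)

theorem IsDilationAverage.measure_le {ν μ : Measure E} {S : Set E} (h : IsDilationAverage ν μ)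
    (hS : MeasurableSet S) (hS₀ : S ⊆ {0}ᶜ)
    (hdil : ∀ t ∈ Ioo (0:ℝ) 1, (fun x => t • x) ⁻¹' S ⊆ S) : μ S ≤ ν S :=
  calc μ S = ∫⁻ t in Ioo (0:ℝ) 1, ν ((fun x => t • x) ⁻¹' S) := h S hS hS₀
    _ ≤ ∫⁻ _ in Ioo (0:ℝ) 1, ν S :=
      setLIntegral_mono' measurableSet_Ioo fun t ht => measure_mono (hdil t ht)
    _ = ν S := by simp [Real.volume_Ioo]

variable [BorelSpace E]

theorem measurable_logKernel (n : ℕ) : Measurable (logKernel (E := E) n) :=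
  ((((measurable_log.comp measurable_norm).pow_const n).div_const _).div
    (measurable_norm.pow_const 2)).smul measurable_id

theorem IsDilationAverage.measure_one_lt_norm_le {ν μ : Measure E} (h : IsDilationAverage ν μ) :
    μ {z | 1 < ‖z‖} ≤ ν {z | 1 < ‖z‖} :=
  h.measure_le measurableSet_one_lt_norm one_lt_norm_subset_compl_zero
    fun _ ht _ => one_lt_norm_of_one_lt_norm_smul ht

theorem measure_one_lt_norm_iterate_le {Mit : ℕ → Measure E}
    (hstep : ∀ j, IsDilationAverage (Mit j) (Mit (j + 1))) (k : ℕ) :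
    Mit k {z | 1 < ‖z‖} ≤ Mit 0 {z | 1 < ‖z‖} := by
  induction k with
  | zero => rfl
  | succ k ih => exact (hstep k).measure_one_lt_norm_le.trans ih

variable [SecondCountableTopology E]

theorem integrableOn_one_lt_norm_logKernel {μ : Measure E} (hμ : μ {z | 1 < ‖z‖} ≠ ⊤) (n : ℕ) :
    IntegrableOn (logKernel n) {z | 1 < ‖z‖} μ :=
  Measure.integrableOn_of_bounded hμ (measurable_logKernel n).aestronglyMeasurable
    ((ae_restrict_iff' measurableSet_one_lt_norm).2
      (ae_of_all _ fun _ hz => norm_logKernel_le_one n (le_of_lt hz)))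

namespace IsDilationAverage

variable {ν μ : Measure E} {S : Set E}

theorem restrict_eq_map_prod (h : IsDilationAverage ν μ)
    (hS : MeasurableSet S) (hS₀ : S ⊆ {0}ᶜ)
    (hdil : ∀ t ∈ Ioo (0:ℝ) 1, (fun x => t • x) ⁻¹' S ⊆ S) [SFinite (ν.restrict S)] :
    μ.restrict S = (((ν.restrict S).prod (volume.restrict (Ioo (0:ℝ) 1))).map
      fun p => p.2 • p.1).restrict S := by
  have hΦ : Measurable fun p : E × ℝ => p.2 • p.1 := measurable_snd.smul measurable_fst
  ext A hA
  have hAS := hA.inter hS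
  rw [Measure.restrict_apply hA, Measure.restrict_apply hA, Measure.map_apply hΦ hAS,
    h _ hAS (inter_subset_right.trans hS₀), Measure.prod_apply_symm (hΦ hAS)]
  refine setLIntegral_congr_fun measurableSet_Ioo fun t ht => ?_
  have hsub : (fun x : E => t • x) ⁻¹' (A ∩ S) ⊆ S :=
    (preimage_mono inter_subset_right).trans (hdil t ht)
  change _ = ν.restrict S ((fun x => t • x) ⁻¹' (A ∩ S))
  rw [Measure.restrict_apply ((measurable_const_smul t) hAS), inter_eq_left.2 hsub]

theorem setIntegral_eq_integral_setIntegral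
    {F : Type*} [NormedAddCommGroup F] [NormedSpace ℝ F]
    (h : IsDilationAverage ν μ) (hS : MeasurableSet S) (hS₀ : S ⊆ {0}ᶜ)
    (hdil : ∀ t ∈ Ioo (0:ℝ) 1, (fun x => t • x) ⁻¹' S ⊆ S) (hνS : ν S ≠ ⊤)
    {g : E → F} (hg : StronglyMeasurable g) {C : ℝ} (hgC : ∀ x ∈ S, ‖g x‖ ≤ C) :
    ∫ x in S, g x ∂μ = ∫ x in S, (∫ t in Ioo (0:ℝ) 1, S.indicator g (t • x)) ∂ν := by
  have := isFiniteMeasure_restrict.2 hνS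
  have hΦ : Measurable fun p : E × ℝ => p.2 • p.1 := measurable_snd.smul measurable_fst
  have hbound : ∀ y, ‖S.indicator g y‖ ≤ max C 0 := fun y => by
    by_cases hy : y ∈ S
    · rw [indicator_of_mem hy]; exact (hgC y hy).trans (le_max_left _ _)
    · rw [indicator_of_notMem hy, norm_zero]; exact le_max_right _ _
  rw [h.restrict_eq_map_prod hS hS₀ hdil, ← integral_indicator hS,
    integral_map hΦ.aemeasurable (hg.indicator hS).aestronglyMeasurable]
  refine integral_prod _ ⟨((hg.indicator hS).comp_measurable hΦ).aestronglyMeasurable,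
    HasFiniteIntegral.of_bounded (ae_of_all _ fun p => hbound _)⟩

theorem setIntegral_logKernel [CompleteSpace E] (h : IsDilationAverage ν μ)
    (hν : ν {z | 1 < ‖z‖} ≠ ⊤) (n : ℕ) :
    ∫ x in {z | 1 < ‖z‖}, logKernel n x ∂μ = ∫ x in {z | 1 < ‖z‖}, logKernel (n + 1) x ∂ν := by
  rw [h.setIntegral_eq_integral_setIntegral measurableSet_one_lt_norm
    one_lt_norm_subset_compl_zero (fun _ ht _ => one_lt_norm_of_one_lt_norm_smul ht) hν
    (measurable_logKernel n).stronglyMeasurable fun x hx => norm_logKernel_le_one n hx.le]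
  exact setIntegral_congr_fun measurableSet_one_lt_norm fun x hx =>
    integral_Ioo_indicator_logKernel_smul n hx

end IsDilationAverage

theorem setIntegral_logKernel_iterate [CompleteSpace E] {Mit : ℕ → Measure E}
    (hstep : ∀ j, IsDilationAverage (Mit j) (Mit (j + 1))) (hfin : Mit 0 {z | 1 < ‖z‖} ≠ ⊤)
    (k n : ℕ) :
    ∫ x in {z | 1 < ‖z‖}, logKernel n x ∂Mit k
      = ∫ x in {z | 1 < ‖z‖}, logKernel (n + k) x ∂Mit 0 := by
  induction k generalizing n with
  | zero => rfl
  | succ k ih =>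
    have hfin_k := ne_top_of_le_ne_top hfin (measure_one_lt_norm_iterate_le hstep k)
    rw [(hstep k).setIntegral_logKernel hfin_k, ih, add_right_comm, add_assoc]

end Kernel

theorem integral_inv_sq_norm_iterated_general
    {E : Type*} [NormedAddCommGroup E] [NormedSpace ℝ E] [CompleteSpace E]
    [MeasurableSpace E] [BorelSpace E] [SecondCountableTopology E]
    (M : Measure E) (hM : M {x : E | 1 < ‖x‖} < ⊤)
    (Mit : ℕ → Measure E) (h0 : Mit 0 = M)
    (hstep : ∀ j : ℕ, ∀ A : Set E, MeasurableSet A → A ⊆ {(0:E)}ᶜ →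
        Mit (j + 1) A = ∫⁻ t in Set.Ioo (0:ℝ) 1, Mit j ((fun x => t • x) ⁻¹' A))
    (m : ℕ) :
    IntegrableOn (fun x : E => (‖x‖ ^ 2)⁻¹ • x) {x : E | 1 < ‖x‖} (Mit m)
    ∧ IntegrableOn (fun z : E => ((Real.log ‖z‖) ^ m / ‖z‖ ^ 2) • z) {z : E | 1 < ‖z‖} M
    ∧ ∫ x in {x : E | 1 < ‖x‖}, (‖x‖ ^ 2)⁻¹ • x ∂(Mit m)
        = (m.factorial : ℝ)⁻¹ •
          ∫ z in {z : E | 1 < ‖z‖}, ((Real.log ‖z‖) ^ m / ‖z‖ ^ 2) • z ∂M := by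
  have hdil : ∀ j, IsDilationAverage (Mit j) (Mit (j + 1)) := hstep
  have hfin : Mit 0 {x : E | 1 < ‖x‖} ≠ ⊤ := by rw [h0]; exact hM.ne
  have hfin_m := ne_top_of_le_ne_top hfin (measure_one_lt_norm_iterate_le hdil m)
  have hkernel : (fun z : E => ((Real.log ‖z‖) ^ m / ‖z‖ ^ 2) • z)
      = fun z => (m.factorial : ℝ) • logKernel m z := by
    funext z
    rw [logKernel_eq_inv_factorial_smul, smul_inv_smul₀ (by positivity)]
  simp only [← logKernel_zero, hkernel, ← h0]
  refine ⟨integrableOn_one_lt_norm_logKernel hfin_m 0,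
    (integrableOn_one_lt_norm_logKernel hfin m).smul _, ?_⟩
  rw [setIntegral_logKernel_iterate hdil hfin, zero_add, integral_smul,
    inv_smul_smul₀ (by positivity)]

/-- Let `E` be a real separable Banach space and `M` a Borel measure on
`E ∖ {0}` with `M({x : ‖x‖ > 1}) < ∞`.  With `M^{<0>} := M` and
`M^{<j+1>}(A) := ∫_0^1 M^{<j>}(t⁻¹A) dt`, for every integer `m ≥ 1` the Bochner integrals
below are well defined and
`∫_{‖x‖>1} x ‖x‖⁻² M^{<m>}(dx) = (1/m!) ∫_{‖z‖>1} z ‖z‖⁻² (ln ‖z‖)^m M(dz)`. -/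
theorem integral_inv_sq_norm_iterated
    {E : Type*} [NormedAddCommGroup E] [NormedSpace ℝ E] [CompleteSpace E]
    [MeasurableSpace E] [BorelSpace E] [SecondCountableTopology E]
    (M : Measure E) (hM : M {x : E | 1 < ‖x‖} < ⊤)
    (Mit : ℕ → Measure E) (h0 : Mit 0 = M)
    (hstep : ∀ j : ℕ, ∀ A : Set E, MeasurableSet A → A ⊆ {(0:E)}ᶜ →
        Mit (j + 1) A = ∫⁻ t in Set.Ioo (0:ℝ) 1, Mit j ((fun x => t • x) ⁻¹' A))
    (m : ℕ) (hm : 1 ≤ m) :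
    IntegrableOn (fun x : E => (‖x‖ ^ 2)⁻¹ • x) {x : E | 1 < ‖x‖} (Mit m)
    ∧ IntegrableOn (fun z : E => ((Real.log ‖z‖) ^ m / ‖z‖ ^ 2) • z) {z : E | 1 < ‖z‖} M
    ∧ ∫ x in {x : E | 1 < ‖x‖}, (‖x‖ ^ 2)⁻¹ • x ∂(Mit m)
        = (m.factorial : ℝ)⁻¹ •
          ∫ z in {z : E | 1 < ‖z‖}, ((Real.log ‖z‖) ^ m / ‖z‖ ^ 2) • z ∂M :=
  integral_inv_sq_norm_iterated_general M hM Mit h0 hstep m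
end

section
/- For every integer m ≥ 1, every Borel set D of the unit sphere {u ∈ E : ‖u‖ = 1} and every r > 0, M^{<m>}({x : ‖x‖ > r and x/‖x‖ ∈ D}) = (1/(m−1)!) · r · ∫_r^∞ (ln w − ln r)^{m−1} · M({x : ‖x‖ > w and x/‖x‖ ∈ D}) · w^{−2} dw, the equality holding in [0,∞]. -/
/-!
For the cones `A_s := {x : s < ‖x‖, x/‖x‖ ∈ D}` one has `t⁻¹ A_s = A_{s/t}`, so the substitution
`t = s/w` turns one step `μ ↦ μ^{<1>}` into `μ^{<1>}(A_s) = ∫_s^∞ (s/w²) μ(A_w) dw`.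
Iterating, the kernels compose by Tonelli over `s < w < v`, and the inner integral
`∫_s^v (log v - log w)^k / w dw = (log v - log s)^(k+1) / (k+1)` turns the kernel
`s (log v - log s)^k / (k! v²)` into the next one.
-/

open MeasureTheory Real ENNReal Set

lemma lintegral_Ioo_zero_one_eq_lintegral_Ioi_comp_div {s : ℝ} (hs : 0 < s) (g : ℝ → ℝ≥0∞) :
    ∫⁻ t in Ioo 0 1, g t = ∫⁻ w in Ioi s, ENNReal.ofReal (s / w ^ 2) * g (s / w) := by
  have himage : (s / ·) '' Ioi s = Ioo 0 1 := by
    ext t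
    refine ⟨?_, fun ht => ⟨s / t, ?_, div_div_cancel₀ hs.ne'⟩⟩
    · rintro ⟨w, hw, rfl⟩
      exact ⟨div_pos hs (hs.trans hw), (div_lt_one (hs.trans hw)).2 hw⟩
    · rw [mem_Ioi, lt_div_iff₀ ht.1]
      nlinarith [ht.2]
  have hderiv : ∀ w ∈ Ioi s, HasDerivWithinAt (s / ·) (-(s / w ^ 2)) (Ioi s) w :=
    fun w hw => by simpa [div_eq_mul_inv] using
      ((hasDerivAt_inv (hs.trans hw).ne').const_mul s).hasDerivWithinAt
  have hinj : InjOn (s / ·) (Ioi s) := fun a _ b _ h => by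
    simpa [div_div_cancel₀ hs.ne'] using congrArg (s / ·) h
  rw [← himage, lintegral_image_eq_lintegral_abs_deriv_mul measurableSet_Ioi hderiv hinj]
  refine setLIntegral_congr_fun measurableSet_Ioi fun w _ => ?_
  rw [abs_neg, abs_of_nonneg (by positivity)]

lemma integral_log_sub_pow_div {s v : ℝ} (hs : 0 < s) (hsv : s ≤ v) (k : ℕ) :
    ∫ w in s..v, (Real.log v - Real.log w) ^ k / w
      = (Real.log v - Real.log s) ^ (k + 1) / (k + 1) := by
  have hpos : ∀ w ∈ uIcc s v, 0 < w := fun w hw => hs.trans_le (uIcc_of_le hsv ▸ hw).1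
  have hderiv : ∀ w ∈ uIcc s v,
      HasDerivAt (fun w => -((Real.log v - Real.log w) ^ (k + 1) / (k + 1)))
        ((Real.log v - Real.log w) ^ k / w) w := fun w hw => by
    have := ((((hasDerivAt_log (hpos w hw).ne').const_sub (Real.log v)).pow (k + 1)).div_const
      ((k : ℝ) + 1)).neg
    refine this.congr_deriv ?_
    push_cast
    field_simp
  have hcont : ContinuousOn (fun w => (Real.log v - Real.log w) ^ k / w) (uIcc s v) :=
    ((continuousOn_const.sub (continuousOn_log.mono fun w hw => (hpos w hw).ne')).pow k).div
      continuousOn_id fun w hw => (hpos w hw).ne'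
  simp [intervalIntegral.integral_eq_sub_of_hasDerivAt hderiv hcont.intervalIntegrable]

lemma lintegral_Ioo_log_sub_pow_div {s v : ℝ} (hs : 0 < s) (hsv : s ≤ v) (k : ℕ) :
    ∫⁻ w in Ioo s v, ENNReal.ofReal ((Real.log v - Real.log w) ^ k / w)
      = ENNReal.ofReal ((Real.log v - Real.log s) ^ (k + 1) / (k + 1)) := by
  have hpos : ∀ w ∈ Icc s v, 0 < w := fun w hw => hs.trans_le hw.1
  have hint : IntegrableOn (fun w => (Real.log v - Real.log w) ^ k / w) (Ioo s v) :=
    ContinuousOn.integrableOn_Icc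
      (((continuousOn_const.sub (continuousOn_log.mono fun w hw => (hpos w hw).ne')).pow k).div
        continuousOn_id fun w hw => (hpos w hw).ne') |>.mono_set Ioo_subset_Icc_self
  have hnonneg :
      0 ≤ᵐ[volume.restrict (Ioo s v)] fun w => (Real.log v - Real.log w) ^ k / w := by
    refine (ae_restrict_iff' measurableSet_Ioo).2 (ae_of_all _ fun w hw => ?_)
    have hw0 := hpos w (Ioo_subset_Icc_self hw)
    have : 0 ≤ Real.log v - Real.log w := sub_nonneg.2 (log_le_log hw0 hw.2.le)
    positivity
  rw [← ofReal_integral_eq_lintegral_ofReal hint hnonneg, ← integral_Ioc_eq_integral_Ioo,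
    ← intervalIntegral.integral_of_le hsv, integral_log_sub_pow_div hs hsv]

noncomputable def iteratedLevyKernel (k : ℕ) (s v : ℝ) : ℝ :=
  s / k.factorial * ((Real.log v - Real.log s) ^ k / v ^ 2)

lemma lintegral_Ioo_ofReal_mul_iteratedLevyKernel (k : ℕ) {s v : ℝ} (hs : 0 < s)
    (hsv : s < v) :
    ∫⁻ w in Ioo s v, ENNReal.ofReal (s / w ^ 2) * ENNReal.ofReal (iteratedLevyKernel k w v)
      = ENNReal.ofReal (iteratedLevyKernel (k + 1) s v) := by
  have hv : 0 < v := hs.trans hsv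
  have hpt : ∀ w ∈ Ioo s v,
      ENNReal.ofReal (s / w ^ 2) * ENNReal.ofReal (iteratedLevyKernel k w v)
        = ENNReal.ofReal (s / (k.factorial * v ^ 2))
          * ENNReal.ofReal ((Real.log v - Real.log w) ^ k / w) := fun w hw => by
    have hw : 0 < w := hs.trans hw.1
    rw [← ofReal_mul (by positivity), ← ofReal_mul (by positivity), iteratedLevyKernel]
    congr 1
    field_simp
  rw [setLIntegral_congr_fun measurableSet_Ioo hpt, lintegral_const_mul' _ _ ofReal_ne_top,
    lintegral_Ioo_log_sub_pow_div hs hsv.le, ← ofReal_mul (by positivity), iteratedLevyKernel,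
    Nat.factorial_succ]
  congr 1
  push_cast
  field_simp

lemma lintegral_Ioi_lintegral_Ioi_swap {f : ℝ → ℝ → ℝ≥0∞}
    (hf : Measurable (Function.uncurry f)) (s : ℝ) :
    ∫⁻ w in Ioi s, ∫⁻ v in Ioi w, f w v = ∫⁻ v in Ioi s, ∫⁻ w in Ioo s v, f w v := by
  have hmeas : Measurable (Function.uncurry fun w v => (Ioi w).indicator (f w) v) :=
    hf.indicator (measurableSet_lt measurable_fst measurable_snd)
  calc ∫⁻ w in Ioi s, ∫⁻ v in Ioi w, f w v
      = ∫⁻ w in Ioi s, ∫⁻ v in Ioi s, (Ioi w).indicator (f w) v :=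
        setLIntegral_congr_fun measurableSet_Ioi fun w hw => by
          rw [lintegral_indicator measurableSet_Ioi, Measure.restrict_restrict measurableSet_Ioi,
            inter_eq_left.2 (Ioi_subset_Ioi (le_of_lt hw))]
    _ = ∫⁻ v in Ioi s, ∫⁻ w in Ioi s, (Ioi w).indicator (f w) v :=
        lintegral_lintegral_swap hmeas.aemeasurable
    _ = ∫⁻ v in Ioi s, ∫⁻ w in Ioo s v, f w v := by
        have hflip : ∀ w v, (Ioi w).indicator (f w) v = (Iio v).indicator (f · v) w := by
          simp [indicator]
        simp_rw [hflip]
        refine lintegral_congr fun v => ?_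
        rw [lintegral_indicator measurableSet_Iio, Measure.restrict_restrict measurableSet_Iio,
          Iio_inter_Ioi]

lemma lintegral_Ioi_iteratedLevyKernel_succ {φ : ℝ → ℝ≥0∞} (hφ : Measurable φ) (k : ℕ)
    {s : ℝ} (hs : 0 < s) :
    ∫⁻ w in Ioi s, ENNReal.ofReal (s / w ^ 2) *
        ∫⁻ v in Ioi w, ENNReal.ofReal (iteratedLevyKernel k w v) * φ v
      = ∫⁻ v in Ioi s, ENNReal.ofReal (iteratedLevyKernel (k + 1) s v) * φ v := by
  have hmeas : Measurable (Function.uncurry fun w v =>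
      ENNReal.ofReal (s / w ^ 2) * (ENNReal.ofReal (iteratedLevyKernel k w v) * φ v)) := by
    unfold iteratedLevyKernel Function.uncurry
    fun_prop
  calc _ = ∫⁻ w in Ioi s, ∫⁻ v in Ioi w,
        ENNReal.ofReal (s / w ^ 2) * (ENNReal.ofReal (iteratedLevyKernel k w v) * φ v) :=
        lintegral_congr fun w => (lintegral_const_mul' _ _ ofReal_ne_top).symm
    _ = ∫⁻ v in Ioi s, ∫⁻ w in Ioo s v,
        ENNReal.ofReal (s / w ^ 2) * ENNReal.ofReal (iteratedLevyKernel k w v) * φ v := by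
        simp_rw [mul_assoc]
        exact lintegral_Ioi_lintegral_Ioi_swap hmeas s
    _ = _ := setLIntegral_congr_fun measurableSet_Ioi fun v hv => by
        rw [lintegral_mul_const _ (by unfold iteratedLevyKernel; fun_prop),
          lintegral_Ioo_ofReal_mul_iteratedLevyKernel k hs hv]

section OuterCone

variable {E : Type*} [NormedAddCommGroup E] [NormedSpace ℝ E]

def outerCone (D : Set E) (s : ℝ) : Set E := {x | s < ‖x‖ ∧ ‖x‖⁻¹ • x ∈ D}

lemma antitone_outerCone (D : Set E) : Antitone (outerCone D) :=
  fun _ _ hab _ hx => ⟨hab.trans_lt hx.1, hx.2⟩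

lemma outerCone_subset_compl_zero (D : Set E) {s : ℝ} (hs : 0 ≤ s) : outerCone D s ⊆ {0}ᶜ :=
  fun _ hx => norm_pos_iff.1 (hs.trans_lt hx.1)

lemma preimage_smul_outerCone (D : Set E) (s : ℝ) {t : ℝ} (ht : 0 < t) :
    (t • ·) ⁻¹' outerCone D s = outerCone D (s / t) := by
  ext x
  have hnorm : ‖t • x‖ = t * ‖x‖ := by rw [norm_smul, norm_of_nonneg ht.le]
  have hdir : ‖t • x‖⁻¹ • (t • x) = ‖x‖⁻¹ • x := by
    rw [hnorm, smul_smul, mul_inv, mul_right_comm, inv_mul_cancel₀ ht.ne', one_mul]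
  simp only [outerCone, mem_preimage, mem_ofPred_eq]
  rw [hdir, hnorm, div_lt_iff₀ ht, mul_comm]

variable [MeasurableSpace E] [BorelSpace E]

lemma measurableSet_outerCone {D : Set E} (hD : MeasurableSet D) (s : ℝ) :
    MeasurableSet (outerCone D s) :=
  (measurableSet_lt measurable_const measurable_norm).inter
    ((measurable_norm.inv.smul measurable_id) hD)

lemma measure_outerCone_of_lintegral_smul_preimage {μ ν : Measure E}
    (hν : ∀ A, MeasurableSet A → A ⊆ {0}ᶜ → ν A = ∫⁻ t in Ioo (0:ℝ) 1, μ ((t • ·) ⁻¹' A))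
    {D : Set E} (hD : MeasurableSet D) {s : ℝ} (hs : 0 < s) :
    ν (outerCone D s) = ∫⁻ w in Ioi s, ENNReal.ofReal (s / w ^ 2) * μ (outerCone D w) := by
  rw [hν _ (measurableSet_outerCone hD s) (outerCone_subset_compl_zero D hs.le),
    lintegral_Ioo_zero_one_eq_lintegral_Ioi_comp_div hs]
  refine setLIntegral_congr_fun measurableSet_Ioi fun w hw => ?_
  rw [preimage_smul_outerCone D s (div_pos hs (hs.trans hw)), div_div_cancel₀ hs.ne']

lemma measure_outerCone_iterate {M : Measure E} {Mit : ℕ → Measure E} (h0 : Mit 0 = M)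
    (hstep : ∀ j : ℕ, ∀ A : Set E, MeasurableSet A → A ⊆ {(0:E)}ᶜ →
        Mit (j + 1) A = ∫⁻ t in Ioo (0:ℝ) 1, Mit j ((fun x => t • x) ⁻¹' A))
    {D : Set E} (hD : MeasurableSet D) (k : ℕ) {s : ℝ} (hs : 0 < s) :
    Mit (k + 1) (outerCone D s)
      = ∫⁻ v in Ioi s, ENNReal.ofReal (iteratedLevyKernel k s v) * M (outerCone D v) := by
  induction k generalizing s with
  | zero =>
    rw [measure_outerCone_of_lintegral_smul_preimage (hstep 0) hD hs, h0]
    simp [iteratedLevyKernel, div_eq_mul_inv]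
  | succ k ih =>
    have hφ : Measurable fun w => M (outerCone D w) :=
      Antitone.measurable fun _ _ hab => measure_mono (antitone_outerCone D hab)
    rw [measure_outerCone_of_lintegral_smul_preimage (hstep (k + 1)) hD hs,
      ← lintegral_Ioi_iteratedLevyKernel_succ hφ k hs]
    refine setLIntegral_congr_fun measurableSet_Ioi fun w hw => ?_
    rw [ih (hs.trans hw)]

end OuterCone

theorem iterated_levy_spectral_function_general
    {E : Type*} [NormedAddCommGroup E] [NormedSpace ℝ E]
    [MeasurableSpace E] [BorelSpace E]
    (M : Measure E)
    (Mit : ℕ → Measure E) (h0 : Mit 0 = M)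
    (hstep : ∀ j : ℕ, ∀ A : Set E, MeasurableSet A → A ⊆ {(0:E)}ᶜ →
        Mit (j + 1) A = ∫⁻ t in Set.Ioo (0:ℝ) 1, Mit j ((fun x => t • x) ⁻¹' A))
    (m : ℕ) (hm : 1 ≤ m)
    (D : Set E) (hD : MeasurableSet D)
    (r : ℝ) (hr : 0 < r) :
    Mit m {x : E | r < ‖x‖ ∧ ‖x‖⁻¹ • x ∈ D}
      = ENNReal.ofReal (r / ((m - 1).factorial : ℝ)) *
        ∫⁻ w in Set.Ioi r,
          M {x : E | w < ‖x‖ ∧ ‖x‖⁻¹ • x ∈ D} *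
            ENNReal.ofReal ((Real.log w - Real.log r) ^ (m - 1) / w ^ 2) := by
  obtain ⟨k, rfl⟩ := Nat.exists_eq_add_of_le' hm
  rw [Nat.add_sub_cancel, ← lintegral_const_mul' _ _ ofReal_ne_top]
  refine (measure_outerCone_iterate h0 hstep hD k hr).trans
    (setLIntegral_congr_fun measurableSet_Ioi fun w _ => ?_)
  rw [iteratedLevyKernel, ofReal_mul (by positivity), outerCone]
  ring

/-- Let `E` be a real separable Banach space and `M` a Borel measure on
`E ∖ {0}`. With `M^{<0>} := M` and `M^{<j+1>}(A) := ∫_0^1 M^{<j>}(t⁻¹A) dt`, for every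
integer `m ≥ 1`, every Borel subset `D` of the unit sphere and every `r > 0`:
`M^{<m>}({x : ‖x‖ > r, x/‖x‖ ∈ D})
  = (1/(m-1)!) r ∫_r^∞ (ln w - ln r)^(m-1) M({x : ‖x‖ > w, x/‖x‖ ∈ D}) w⁻² dw`,
the equality holding in `[0,∞]`. -/
theorem iterated_levy_spectral_function
    {E : Type*} [NormedAddCommGroup E] [NormedSpace ℝ E] [CompleteSpace E]
    [MeasurableSpace E] [BorelSpace E] [SecondCountableTopology E]
    (M : Measure E)
    (Mit : ℕ → Measure E) (h0 : Mit 0 = M)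
    (hstep : ∀ j : ℕ, ∀ A : Set E, MeasurableSet A → A ⊆ {(0:E)}ᶜ →
        Mit (j + 1) A = ∫⁻ t in Set.Ioo (0:ℝ) 1, Mit j ((fun x => t • x) ⁻¹' A))
    (m : ℕ) (hm : 1 ≤ m)
    (D : Set E) (hD : MeasurableSet D) (hDS : D ⊆ {u : E | ‖u‖ = 1})
    (r : ℝ) (hr : 0 < r) :
    Mit m {x : E | r < ‖x‖ ∧ ‖x‖⁻¹ • x ∈ D}
      = ENNReal.ofReal (r / ((m - 1).factorial : ℝ)) *
        ∫⁻ w in Set.Ioi r,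
          M {x : E | w < ‖x‖ ∧ ‖x‖⁻¹ • x ∈ D} *
            ENNReal.ofReal ((Real.log w - Real.log r) ^ (m - 1) / w ^ 2) :=
  iterated_levy_spectral_function_general M Mit h0 hstep m hm D hD r hr
end

section
/- For every Borel set B ⊆ E ∖ {0}, ∫_0^1 M_σ(s^{−1}B) ds = M_{σ₁}(B), where s^{−1}B := {s^{−1}x : x ∈ B} and σ₁ is the finite Borel measure on S × (0,2) given by dσ₁(u,z) = (z+1)^{−1} dσ(u,z). In particular, the class of measures of the form M_σ is invariant under the transform M ↦ (B ↦ ∫_0^1 M(s^{−1}B) ds). -/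
/-!
Write `M_σ(A) = ∫ ρ_{u,z}(A) dσ(u,z)`, where `ρ_{u,z}` is the image of `w^{-(z+1)} dw` on `(0,∞)`
under `w ↦ w • u`. The substitution `w ↦ s w` gives `ρ_{u,z}(s⁻¹B) = s^z ρ_{u,z}(B)`, so by Tonelli
the left-hand side is `∫ (∫_0^1 s^z ds) ρ_{u,z}(B) dσ`, and `∫_0^1 s^z ds = (z+1)⁻¹` because
`z > -1` for σ-almost every `(u,z)`.
-/

open MeasureTheory Real ENNReal

/-- The measure `M_σ` on `E ∖ {0}` associated with a finite Borel measure `σ` on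
`S × (0,2)` (modelled as a measure on `E × ℝ` concentrated on the unit sphere times `(0,2)`):
`M_σ(B) = ∫_{S×(0,2)} (∫_0^∞ 1_B(w·u) w^{-(z+1)} dw) σ(d(u,z))`. -/
noncomputable def Msig {E : Type*} [NormedAddCommGroup E] [NormedSpace ℝ E]
    [MeasurableSpace E] [BorelSpace E] (σ : Measure (E × ℝ)) : Measure E :=
  σ.bind (fun p => Measure.map (fun w : ℝ => w • p.1)
    ((MeasureTheory.volume.restrict (Set.Ioi (0:ℝ))).withDensity
        (fun w => ENNReal.ofReal (w ^ (-(p.2 + 1))))))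

open Set

noncomputable def powerLawMeasure (z : ℝ) : Measure ℝ :=
  (volume.restrict (Ioi 0)).withDensity fun w => ENNReal.ofReal (w ^ (-(z + 1)))

lemma map_const_mul_volume_restrict_Ioi {s : ℝ} (hs : 0 < s) :
    (volume.restrict (Ioi 0)).map (s * ·) = ENNReal.ofReal s⁻¹ • volume.restrict (Ioi (0:ℝ)) := by
  have hpre : (s * ·) ⁻¹' Ioi (0:ℝ) = Ioi 0 := by
    ext w; simp [mul_pos_iff_of_pos_left hs]
  conv_lhs => rw [← hpre]
  rw [← Measure.restrict_map (measurable_const_mul s) measurableSet_Ioi,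
    Real.map_volume_mul_left hs.ne', abs_of_pos (inv_pos.mpr hs), Measure.restrict_smul]

lemma inv_mul_inv_mul_rpow {s v : ℝ} (hs : 0 < s) (hv : 0 < v) (z : ℝ) :
    s⁻¹ * (s⁻¹ * v) ^ (-(z + 1)) = s ^ z * v ^ (-(z + 1)) := by
  rw [Real.mul_rpow (inv_nonneg.mpr hs.le) hv.le, Real.inv_rpow hs.le, ← Real.rpow_neg hs.le,
    neg_neg, Real.rpow_add hs, Real.rpow_one]
  field_simp

lemma map_const_mul_powerLawMeasure {s : ℝ} (hs : 0 < s) (z : ℝ) :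
    (powerLawMeasure z).map (s * ·) = ENNReal.ofReal (s ^ z) • powerLawMeasure z := by
  set f : ℝ → ℝ≥0∞ := fun w => ENNReal.ofReal (w ^ (-(z + 1)))
  have hf : Measurable f := by fun_prop
  have hm : Measurable (s * · : ℝ → ℝ) := measurable_const_mul s
  ext A hA
  have hg : Measurable (A.indicator fun v => f (s⁻¹ * v)) :=
    (hf.comp (measurable_const_mul _)).indicator hA
  rw [Measure.map_apply hm hA, powerLawMeasure, Measure.smul_apply, withDensity_apply _ (hm hA),
    withDensity_apply _ hA, smul_eq_mul, ← lintegral_indicator (hm hA)]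
  have hcomp : ((s * ·) ⁻¹' A).indicator f = A.indicator (fun v => f (s⁻¹ * v)) ∘ (s * ·) := by
    ext w; by_cases h : s * w ∈ A <;> simp [h, inv_mul_cancel_left₀ hs.ne']
  calc ∫⁻ w in Ioi 0, ((s * ·) ⁻¹' A).indicator f w
      = ∫⁻ v in Ioi 0, A.indicator (fun v => ENNReal.ofReal s⁻¹ * f (s⁻¹ * v)) v := by
        rw [hcomp, Function.comp_def, ← lintegral_map hg hm, map_const_mul_volume_restrict_Ioi hs,
          lintegral_smul_measure, smul_eq_mul, ← lintegral_const_mul' _ _ ofReal_ne_top]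
        simp_rw [indicator_mul_right]
    _ = ∫⁻ v in A ∩ Ioi 0, ENNReal.ofReal (s ^ z) * f v := by
        rw [lintegral_indicator hA, Measure.restrict_restrict hA]
        refine setLIntegral_congr_fun (hA.inter measurableSet_Ioi) fun v hv => ?_
        rw [← ofReal_mul (inv_nonneg.mpr hs.le), inv_mul_inv_mul_rpow hs hv.2,
          ofReal_mul (rpow_nonneg hs.le _)]
    _ = _ := by rw [lintegral_const_mul _ hf, Measure.restrict_restrict hA]

section

variable {E : Type*} [NormedAddCommGroup E] [NormedSpace ℝ E] [MeasurableSpace E] [BorelSpace E]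

noncomputable def radialMeasure (u : E) (z : ℝ) : Measure E :=
  (powerLawMeasure z).map (· • u)

lemma radialMeasure_preimage_const_smul {s : ℝ} (hs : 0 < s) (u : E) (z : ℝ) {B : Set E}
    (hB : MeasurableSet B) :
    radialMeasure u z ((s • ·) ⁻¹' B) = ENNReal.ofReal (s ^ z) * radialMeasure u z B := by
  have hsmul : Measurable (· • u : ℝ → E) := measurable_id.smul_const u
  rw [radialMeasure, ← Measure.map_apply (measurable_const_smul s) hB,
    Measure.map_map (measurable_const_smul s) hsmul]
  have hcomm : (s • ·) ∘ (· • u) = (· • u) ∘ (s * · : ℝ → ℝ) := by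
    ext w; simp [smul_smul]
  rw [hcomm, ← Measure.map_map hsmul (measurable_const_mul s), map_const_mul_powerLawMeasure hs,
    Measure.map_smul, Measure.smul_apply, smul_eq_mul]

lemma radialMeasure_apply (u : E) (z : ℝ) {A : Set E} (hA : MeasurableSet A) :
    radialMeasure u z A
      = ∫⁻ w in Ioi 0, A.indicator 1 (w • u) * ENNReal.ofReal (w ^ (-(z + 1))) := by
  have hsmul : Measurable (· • u : ℝ → E) := measurable_id.smul_const u
  rw [radialMeasure, powerLawMeasure, Measure.map_apply hsmul hA, withDensity_apply _ (hsmul hA),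
    ← lintegral_indicator (hsmul hA)]
  refine lintegral_congr fun w => ?_
  by_cases h : w • u ∈ A <;> simp [h]

lemma measurable_radialMeasure : Measurable fun p : E × ℝ => radialMeasure p.1 p.2 := by
  refine Measure.measurable_of_measurable_coe _ fun A hA => ?_
  simp_rw [radialMeasure_apply _ _ hA]
  refine Measurable.lintegral_prod_right' (f := fun q : (E × ℝ) × ℝ =>
    A.indicator 1 (q.2 • q.1.1) * ENNReal.ofReal (q.2 ^ (-(q.1.2 + 1)))) ?_
  exact ((measurable_one.indicator hA).comp (measurable_snd.smul measurable_fst.fst)).mul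
    (by fun_prop)

lemma Msig_apply (σ : Measure (E × ℝ)) {A : Set E} (hA : MeasurableSet A) :
    Msig σ A = ∫⁻ p, radialMeasure p.1 p.2 A ∂σ :=
  Measure.bind_apply hA measurable_radialMeasure.aemeasurable

lemma lintegral_rpow_Ioo_zero_one {z : ℝ} (hz : -1 < z) :
    ∫⁻ s in Ioo 0 1, ENNReal.ofReal (s ^ z) = ENNReal.ofReal (z + 1)⁻¹ := by
  have hint : IntegrableOn (fun s : ℝ => s ^ z) (Ioo 0 1) := by
    rw [← integrableOn_Ioc_iff_integrableOn_Ioo,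
      ← intervalIntegrable_iff_integrableOn_Ioc_of_le zero_le_one]
    exact intervalIntegral.intervalIntegrable_rpow' hz
  rw [← ofReal_integral_eq_lintegral_ofReal hint
      ((ae_restrict_mem measurableSet_Ioo).mono fun s hs => rpow_nonneg hs.1.le z),
    ← integral_Ioc_eq_integral_Ioo, ← intervalIntegral.integral_of_le zero_le_one,
    integral_rpow (Or.inl hz), Real.one_rpow, Real.zero_rpow (by linarith), sub_zero, one_div]

end

theorem Msig_invariant_Jurek_transform_general
    {E : Type*} [NormedAddCommGroup E] [NormedSpace ℝ E]
    [MeasurableSpace E] [BorelSpace E]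
    (σ : Measure (E × ℝ)) [IsFiniteMeasure σ]
    (hσ : σ {p : E × ℝ | ‖p.1‖ = 1 ∧ p.2 ∈ Set.Ioo (0:ℝ) 2}ᶜ = 0)
    (B : Set E) (hB : MeasurableSet B) :
    ∫⁻ s in Set.Ioo (0:ℝ) 1, Msig σ ((fun x => s • x) ⁻¹' B)
      = Msig (σ.withDensity (fun p => ENNReal.ofReal (p.2 + 1)⁻¹)) B := by
  have hρ : Measurable fun p : E × ℝ => radialMeasure p.1 p.2 B :=
    (Measure.measurable_coe hB).comp measurable_radialMeasure
  have hz : ∀ᵐ p ∂σ, -1 < p.2 :=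
    (show ∀ᵐ p ∂σ, ‖p.1‖ = 1 ∧ p.2 ∈ Ioo 0 2 from hσ).mono fun p hp => by linarith [hp.2.1]
  calc ∫⁻ s in Ioo (0:ℝ) 1, Msig σ ((s • ·) ⁻¹' B)
      = ∫⁻ s in Ioo 0 1, ∫⁻ p, ENNReal.ofReal (s ^ p.2) * radialMeasure p.1 p.2 B ∂σ := by
        refine setLIntegral_congr_fun measurableSet_Ioo fun s hs => ?_
        simp_rw [Msig_apply σ (hB.preimage (measurable_const_smul s)),
          radialMeasure_preimage_const_smul hs.1 _ _ hB]
    _ = ∫⁻ p, (∫⁻ s in Ioo 0 1, ENNReal.ofReal (s ^ p.2)) * radialMeasure p.1 p.2 B ∂σ := by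
        rw [lintegral_lintegral_swap (by fun_prop)]
        exact lintegral_congr fun p =>
          lintegral_mul_const _ (measurable_id.pow_const p.2).ennreal_ofReal
    _ = ∫⁻ p, ENNReal.ofReal (p.2 + 1)⁻¹ * radialMeasure p.1 p.2 B ∂σ :=
        lintegral_congr_ae (hz.mono fun p hp => by dsimp only; rw [lintegral_rpow_Ioo_zero_one hp])
    _ = _ := by
        rw [Msig_apply _ hB, lintegral_withDensity_eq_lintegral_mul _ (by fun_prop) hρ]
        rfl

/-- For every Borel set `B ⊆ E ∖ {0}`,
`∫_0^1 M_σ(s⁻¹B) ds = M_{σ₁}(B)`, where `s⁻¹B = {s⁻¹x : x ∈ B}` and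
`dσ₁(u,z) = (z+1)⁻¹ dσ(u,z)`; in particular the class of measures `M_σ` is invariant under
the transform `M ↦ (B ↦ ∫_0^1 M(s⁻¹B) ds)`. -/
theorem Msig_invariant_Jurek_transform
    {E : Type*} [NormedAddCommGroup E] [NormedSpace ℝ E] [CompleteSpace E]
    [MeasurableSpace E] [BorelSpace E] [SecondCountableTopology E]
    (σ : Measure (E × ℝ)) [IsFiniteMeasure σ]
    (hσ : σ {p : E × ℝ | ‖p.1‖ = 1 ∧ p.2 ∈ Set.Ioo (0:ℝ) 2}ᶜ = 0)
    (B : Set E) (hB : MeasurableSet B) (hB0 : B ⊆ {(0:E)}ᶜ) :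
    ∫⁻ s in Set.Ioo (0:ℝ) 1, Msig σ ((fun x => s • x) ⁻¹' B)
      = Msig (σ.withDensity (fun p => ENNReal.ofReal (p.2 + 1)⁻¹)) B :=
  Msig_invariant_Jurek_transform_general σ hσ B hB
end
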